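/- Suppose valuations v₁,…,vₙ over items I admit a unique welfare-maximizing partition B = {B₁,…,Bₙ} of bundles. If there exists a dynamic bundle-pricing scheme that guarantees the optimal allocation for every arrival order and every tie-breaking, then the initial (first-round) prices, used statically throughout, also guarantee the optimal allocation for every arrival order and every tie-breaking. -/

import Mathlib

/-!
Letting agent `i` arrive first and break ties towards an arbitrary utility-maximizing set `y` of
the initially posted bundles extends to a valid run of the dynamic scheme, so optimality of the
scheme forces `⋃ y = B i`: every initial demand of agent `i` covers exactly `B i`.

Under the static prices, argue along the arrival order. The earlier agents hold exactly their
optimal bundles, which are disjoint from `B (σ k)`; so an initial demand of the current agent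
meets the sold bundles only in empty bundles. Discarding those keeps its union and, prices being
nonnegative, does not lower its utility, and it is still available. Hence the current agent's
choice is an initial demand as well, and covers `B (σ k)`.
-/

variable {I : Type*} [Fintype I] [DecidableEq I]

/-- Union of a set of bundles. -/
def bun (x : Finset (Finset I)) : Finset I := x.biUnion id

/-- Utility of a set of bundles `x` for valuation `v` at bundle prices `pr`. -/
def butil (v : Finset I → ℝ) (pr : Finset I → ℝ) (x : Finset (Finset I)) : ℝ :=
  v (bun x) - ∑ b ∈ x, pr b

/-- The items sold in a history (a list of (agent, purchased set of bundles) pairs). -/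
def soldOf (h : List (ℕ × Finset (Finset I))) : Finset I :=
  (h.map (fun q => bun q.2)).foldr (· ∪ ·) ∅

/-- The history of the first `t` steps of a run: arrival order `σ`, purchases `x`.  Agents are
recorded as pairs `⟨n, i⟩`. -/
def histUpTo (n : ℕ) (σ : Equiv.Perm (Fin n)) (x : Fin n → Finset (Finset I)) :
    ℕ → List (ℕ × Finset (Finset I))
  | 0 => []
  | k + 1 =>
      histUpTo n σ x k ++ (if h : k < n then [(((σ ⟨k, h⟩ : Fin n) : ℕ), x ⟨k, h⟩)] else [])

/-- A dynamic bundle-pricing scheme: from any history it produces a partition of the remaining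
items into bundles, with prices. -/
def SchemeValid (n : ℕ) (scheme : List (ℕ × Finset (Finset I)) →
    Finset (Finset I) × (Finset I → ℝ)) : Prop :=
  ∀ h, (scheme h).1.biUnion id = Finset.univ \ soldOf h ∧
    (∀ b₁ ∈ (scheme h).1, ∀ b₂ ∈ (scheme h).1, b₁ ≠ b₂ → Disjoint b₁ b₂) ∧
    (∀ b ∈ (scheme h).1, 0 ≤ (scheme h).2 b)

/-- A valid run of a dynamic scheme: at each step `k`, the arriving agent `σ k` buys a
utility-maximizing set `x k` of the posted bundles (ties broken arbitrarily). -/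
def ValidDynRun (n : ℕ) (v : Fin n → Finset I → ℝ)
    (scheme : List (ℕ × Finset (Finset I)) → Finset (Finset I) × (Finset I → ℝ))
    (σ : Equiv.Perm (Fin n)) (x : Fin n → Finset (Finset I)) : Prop :=
  ∀ k : Fin n,
    x k ⊆ (scheme (histUpTo n σ x k)).1 ∧
      ∀ y ⊆ (scheme (histUpTo n σ x k)).1,
        butil (v (σ k)) (scheme (histUpTo n σ x k)).2 y ≤
          butil (v (σ k)) (scheme (histUpTo n σ x k)).2 (x k)

/-- A valid run of a *static* bundle pricing `(P, pr)`: at each step the arriving agent buys a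
utility-maximizing set of the not-yet-sold bundles. -/
def ValidStaticRun (n : ℕ) (v : Fin n → Finset I → ℝ)
    (P : Finset (Finset I)) (pr : Finset I → ℝ)
    (σ : Equiv.Perm (Fin n)) (x : Fin n → Finset (Finset I)) : Prop :=
  ∀ k : Fin n,
    x k ⊆ P \ (Finset.univ.filter (· < k)).biUnion x ∧
      ∀ y ⊆ P \ (Finset.univ.filter (· < k)).biUnion x,
        butil (v (σ k)) pr y ≤ butil (v (σ k)) pr (x k)

section Demand

variable {α : Type*} [DecidableEq α]

def IsDemand (v pr : Finset α → ℝ) (P y : Finset (Finset α)) : Prop :=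
  y ⊆ P ∧ ∀ z ⊆ P, butil v pr z ≤ butil v pr y

theorem exists_isDemand (v pr : Finset α → ℝ) (P : Finset (Finset α)) :
    ∃ y, IsDemand v pr P y := by
  obtain ⟨y, hy, hmax⟩ :=
    Finset.exists_max_image P.powerset (butil v pr) ⟨∅, Finset.empty_mem_powerset _⟩
  exact ⟨y, Finset.mem_powerset.mp hy, fun z hz => hmax z (Finset.mem_powerset.mpr hz)⟩

theorem bun_biUnion {ι : Type*} (s : Finset ι) (x : ι → Finset (Finset α)) :
    bun (s.biUnion x) = s.biUnion fun j => bun (x j) :=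
  Finset.biUnion_biUnion s x id

theorem bun_sdiff_of_disjoint {y S : Finset (Finset α)} (h : Disjoint (bun y) (bun S)) :
    bun (y \ S) = bun y := by
  refine (Finset.biUnion_subset_biUnion_of_subset_left id Finset.sdiff_subset).antisymm ?_
  intro a ha
  obtain ⟨b, hb, hab⟩ := Finset.mem_biUnion.mp ha
  have hbS : b ∉ S := fun hbS =>
    Finset.disjoint_left.mp h ha (Finset.mem_biUnion.mpr ⟨b, hbS, hab⟩)
  exact Finset.mem_biUnion.mpr ⟨b, Finset.mem_sdiff.mpr ⟨hb, hbS⟩, hab⟩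

theorem butil_le_of_subset_of_bun_eq {v pr : Finset α → ℝ} {y z : Finset (Finset α)}
    (hzy : z ⊆ y) (hbun : bun z = bun y) (hpr : ∀ b ∈ y, 0 ≤ pr b) :
    butil v pr y ≤ butil v pr z := by
  have hsum : ∑ b ∈ z, pr b ≤ ∑ b ∈ y, pr b :=
    Finset.sum_le_sum_of_subset_of_nonneg hzy fun b hb _ => hpr b hb
  rw [butil, butil, hbun]
  linarith

theorem IsDemand.of_sdiff {v pr : Finset α → ℝ} {P S y x : Finset (Finset α)}
    (hpr : ∀ b ∈ P, 0 ≤ pr b) (hy : IsDemand v pr P y) (hyS : Disjoint (bun y) (bun S))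
    (hx : IsDemand v pr (P \ S) x) : IsDemand v pr P x := by
  refine ⟨hx.1.trans Finset.sdiff_subset, fun z hz => ?_⟩
  calc butil v pr z ≤ butil v pr y := hy.2 z hz
    _ ≤ butil v pr (y \ S) := butil_le_of_subset_of_bun_eq Finset.sdiff_subset
          (bun_sdiff_of_disjoint hyS) fun b hb => hpr b (hy.1 hb)
    _ ≤ butil v pr x := hx.2 _ (Finset.sdiff_subset_sdiff hy.1 le_rfl)

variable {n : ℕ} {v : Fin n → Finset α → ℝ} {P : Finset (Finset α)} {pr : Finset α → ℝ}

theorem ValidStaticRun.bun_eq (B : Fin n → Finset α)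
    (hdisj : ∀ i j, i ≠ j → Disjoint (B i) (B j)) (hpr : ∀ b ∈ P, 0 ≤ pr b)
    (hB : ∀ i y, IsDemand (v i) pr P y → bun y = B i)
    {σ : Equiv.Perm (Fin n)} {x : Fin n → Finset (Finset α)} (hrun : ValidStaticRun n v P pr σ x)
    (k : Fin n) : bun (x k) = B (σ k) := by
  induction k using WellFoundedLT.induction with
  | _ k ih =>
    obtain ⟨y, hy⟩ := exists_isDemand (v (σ k)) pr P
    refine hB _ _ (hy.of_sdiff hpr ?_ (hrun k))
    rw [hB _ _ hy, bun_biUnion, Finset.disjoint_biUnion_right]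
    intro j hj
    have hjk : j < k := (Finset.mem_filter.mp hj).2
    rw [ih j hjk]
    exact hdisj _ _ (σ.injective.ne hjk.ne')

end Demand

section DynamicRun

variable {α : Type*} {n : ℕ}

/-- The history of the run in which every agent buys `pick` of the history so far; `histUpTo`
cannot build it, as it takes the purchases as input. -/
def runHist (n : ℕ) (pick : List (ℕ × Finset (Finset α)) → Fin n → Finset (Finset α))
    (σ : Equiv.Perm (Fin n)) : ℕ → List (ℕ × Finset (Finset α))
  | 0 => []
  | k + 1 => runHist n pick σ k ++
      (if h : k < n then [((σ ⟨k, h⟩ : ℕ), pick (runHist n pick σ k) (σ ⟨k, h⟩))] else [])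

def pickRun (n : ℕ) (pick : List (ℕ × Finset (Finset α)) → Fin n → Finset (Finset α))
    (σ : Equiv.Perm (Fin n)) (k : Fin n) : Finset (Finset α) :=
  pick (runHist n pick σ k) (σ k)

theorem histUpTo_pickRun (pick : List (ℕ × Finset (Finset α)) → Fin n → Finset (Finset α))
    (σ : Equiv.Perm (Fin n)) (m : ℕ) :
    histUpTo n σ (pickRun n pick σ) m = runHist n pick σ m := by
  induction m with
  | zero => rfl
  | succ k ih => simp only [histUpTo, runHist, ih, pickRun]

variable [DecidableEq α] {v : Fin n → Finset α → ℝ}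
  {scheme : List (ℕ × Finset (Finset α)) → Finset (Finset α) × (Finset α → ℝ)}

theorem validDynRun_pickRun {pick : List (ℕ × Finset (Finset α)) → Fin n → Finset (Finset α)}
    (hpick : ∀ h j, IsDemand (v j) (scheme h).2 (scheme h).1 (pick h j)) (σ : Equiv.Perm (Fin n)) :
    ValidDynRun n v scheme σ (pickRun n pick σ) := by
  intro k
  rw [histUpTo_pickRun]
  exact hpick _ _

theorem exists_validDynRun_first (i : Fin n) {y : Finset (Finset α)}
    (hy : IsDemand (v i) (scheme []).2 (scheme []).1 y) :
    ∃ σ x, ValidDynRun n v scheme σ x ∧ σ ⟨0, i.pos⟩ = i ∧ x ⟨0, i.pos⟩ = y := by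
  choose demand hdemand using fun h (j : Fin n) => exists_isDemand (v j) (scheme h).2 (scheme h).1
  let pick h j := if h = [] ∧ j = i then y else demand h j
  have hpick : ∀ h j, IsDemand (v j) (scheme h).2 (scheme h).1 (pick h j) := by
    intro h j
    by_cases hc : h = [] ∧ j = i
    · rw [show pick h j = y from if_pos hc, hc.1, hc.2]
      exact hy
    · rw [show pick h j = demand h j from if_neg hc]
      exact hdemand h j
  have hσ : Equiv.swap ⟨0, i.pos⟩ i ⟨0, i.pos⟩ = i := Equiv.swap_apply_left _ _
  refine ⟨_, _, validDynRun_pickRun hpick (Equiv.swap ⟨0, i.pos⟩ i), hσ, ?_⟩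
  simp only [pickRun, runHist, hσ, pick, and_self, if_true]

theorem bun_eq_of_isDemand_initial (B : Fin n → Finset α)
    (hdynopt : ∀ (σ : Equiv.Perm (Fin n)) (x : Fin n → Finset (Finset α)),
      ValidDynRun n v scheme σ x → ∀ k : Fin n, bun (x k) = B (σ k))
    (i : Fin n) (y : Finset (Finset α)) (hy : IsDemand (v i) (scheme []).2 (scheme []).1 y) :
    bun y = B i := by
  obtain ⟨σ, x, hrun, hσ, hx⟩ := exists_validDynRun_first i hy
  simpa only [hσ, hx] using hdynopt σ x hrun ⟨0, i.pos⟩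

end DynamicRun

theorem stmt_7 (n : ℕ) (v : Fin n → Finset I → ℝ)
    (B : Fin n → Finset I)
    (hdisj : ∀ i j, i ≠ j → Disjoint (B i) (B j))
    (scheme : List (ℕ × Finset (Finset I)) → Finset (Finset I) × (Finset I → ℝ))
    (hscheme : SchemeValid n scheme)
    (hdynopt : ∀ (σ : Equiv.Perm (Fin n)) (x : Fin n → Finset (Finset I)),
      ValidDynRun n v scheme σ x → ∀ k : Fin n, bun (x k) = B (σ k)) :
    ∀ (σ : Equiv.Perm (Fin n)) (x : Fin n → Finset (Finset I)),
      ValidStaticRun n v (scheme []).1 (scheme []).2 σ x →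
        ∀ k : Fin n, bun (x k) = B (σ k) :=
  fun _ _ hrun => hrun.bun_eq B hdisj (hscheme []).2.2 (bun_eq_of_isDemand_initial B hdynopt)
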